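/- arXiv:2412.18891 — 3 statements merged into one kernel-verified Lean document; each statement's English description precedes it below -/
import Mathlib

section
/- Let G be a non-trivial group, let 𝒞 be a joinable compression family for G, and let H = ⟨⋃𝒞⟩ be the subgroup of G generated by the members of 𝒞. If 𝒞 is moreover a shift-joinable compression family for H, then H is perfect (H = D(H)), H is simple, and H is the monolith of G (H is non-trivial, normal in G, and contained in every non-trivial normal subgroup of G). -/
namespace Paper

variable {G : Type*} [Group G]

/-- Conjugate of a subgroup: `g A g⁻¹`. -/
def conjS (g : G) (A : Subgroup G) : Subgroup G := A.map (MulAut.conj g).toMonoidHom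

/-- The family is invariant under conjugation in `G`. -/
def ConjInvariant (C : Set (Subgroup G)) : Prop := ∀ (g : G), ∀ A ∈ C, conjS g A ∈ C

/-- Condition (A): every member of the family is non-abelian. -/
def CondA (C : Set (Subgroup G)) : Prop :=
  ∀ A ∈ C, ∃ a ∈ A, ∃ b ∈ A, a * b ≠ b * a

/-- Condition (B): for every nontrivial element `g` of `H` there is a member `A` of the
family with `[A, gAg⁻¹] = 1`. -/
def CondB (C : Set (Subgroup G)) (H : Subgroup G) : Prop :=
  ∀ g ∈ H, g ≠ 1 → ∃ A ∈ C, ⁅A, conjS g A⁆ = (⊥ : Subgroup G)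

/-- Condition (C): `H` is semi-transitive on the family. -/
def CondC (C : Set (Subgroup G)) (H : Subgroup G) : Prop :=
  ∀ A ∈ C, ∀ B ∈ C, ∃ g ∈ H, conjS g A ≤ B

/-- Condition (D): the family is joinable. -/
def CondD (C : Set (Subgroup G)) : Prop :=
  ∀ A ∈ C, ∀ B ∈ C, ∀ C' ∈ C, ⁅A, C'⁆ = (⊥ : Subgroup G) → ¬ C' ≤ B →
    ∃ D ∈ C, A ⊔ B ≤ D

/-- Condition (E): the family is shiftable over `H`: for each `A` in the family there is
`g ∈ H` and a homomorphism from the unrestricted direct product `∏_{i ≥ 1} A` into `H`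
restricting to the identity on the first factor, which `g` conjugates by the shift. -/
def CondE (C : Set (Subgroup G)) (H : Subgroup G) : Prop :=
  ∀ A ∈ C, ∃ g ∈ H, ∃ φ : (ℕ → A) →* G,
    (∀ f : ℕ → A, φ f ∈ H) ∧
    (∀ a : A, φ (fun i => if i = 0 then a else 1) = (a : G)) ∧
    (∀ f : ℕ → A, g * φ f * g⁻¹ = φ (fun i => match i with | 0 => 1 | (n+1) => f n))

/-- Conditions (A)–(C): a compression family for `H`. -/
def IsCompressionFamily (C : Set (Subgroup G)) (H : Subgroup G) : Prop :=
  ConjInvariant C ∧ CondA C ∧ CondB C H ∧ CondC C H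

/-- Conditions (A)–(D): a joinable compression family for `H`. -/
def IsJoinableCompressionFamily (C : Set (Subgroup G)) (H : Subgroup G) : Prop :=
  IsCompressionFamily C H ∧ CondD C

/-- Conditions (A)–(E): a shift-joinable compression family for `H`. -/
def IsShiftJoinableCompressionFamily (C : Set (Subgroup G)) (H : Subgroup G) : Prop :=
  IsJoinableCompressionFamily C H ∧ CondE C H

/-!
Work modulo a subgroup `N` normalized by `S` and containing some `n ≠ 1` of `S`. By (B) and (C),
every `A ∈ 𝒞` commutes with `mAm⁻¹` for some `m ∈ N ∩ S`; since `m ≡ 1` modulo `N`, the members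
of `𝒞` are abelian modulo `N`. For `A, B ∈ 𝒞`, either `mAm⁻¹ ≤ B`, so that `A` commutes with
`B` modulo `N`, or (D) puts `A` and `B` inside one member `D ∈ 𝒞`. Hence `⁅H, H⁆ ≤ N`, and so
`H ≤ N` since `H` is perfect. Perfectness comes from (E): with `c = φ(a, a, …)` one has
`c = a · gcg⁻¹`, that is `a = ⁅c, g⁆`. Taking `S = G` and `N` normal gives the monolith,
taking `S = H` and `N` the image of a normal subgroup of `H` gives simplicity.
-/

open Subgroup
open scoped commutatorElement

section Normalizer

variable {N : Subgroup G} {x y n : G}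

theorem commutatorElement_mem_of_mem_normalizer (hx : x ∈ normalizer N) (hn : n ∈ N) :
    ⁅x, n⁆ ∈ N := by
  rw [commutatorElement_def]
  exact mul_mem ((mem_normalizer_iff.mp hx n).mp hn) (inv_mem hn)

theorem commutatorElement_mul_right_mem_iff (hx : x ∈ normalizer N) (hn : n ∈ N) :
    ⁅x, n * y⁆ ∈ N ↔ ⁅x, y⁆ ∈ N := by
  rw [commutatorElement_mul_right_eq_mul_conj, mul_assoc _ n, mul_assoc,
    mul_mem_cancel_left (commutatorElement_mem_of_mem_normalizer hx hn),
    ← mem_normalizer_iff.mp (le_normalizer hn)]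

theorem commutator_sSup_le {H : Subgroup G} {C : Set (Subgroup G)}
    (hC : sSup C ≤ normalizer N) (h : ∀ B ∈ C, ⁅H, B⁆ ≤ N) : ⁅H, sSup C⁆ ≤ N := by
  refine commutator_le.mpr fun x hx y hy => ?_
  rw [sSup_eq_iSup'] at hC hy
  induction hy using iSup_induction' with
  | hp B y hy => exact commutator_le.mp (h B B.2) x hx y hy
  | h1 => simpa only [commutatorElement_one_right] using one_mem N
  | hmul y z hy _ hxy hxz =>
    rw [commutatorElement_mul_right_eq_mul_conj, mul_assoc _ y, mul_assoc]
    exact mul_mem hxy ((mem_normalizer_iff.mp (hC hy) _).mp hxz)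

end Normalizer

section Conjugate

variable {A B N : Subgroup G} {g a : G}

theorem conj_mem_conjS (ha : a ∈ A) : g * a * g⁻¹ ∈ conjS g A :=
  mem_map.mpr ⟨a, ha, by simp⟩

theorem commutator_conjS_eq_bot_iff :
    ⁅A, conjS g B⁆ = ⊥ ↔ ∀ u ∈ A, ∀ v ∈ B, ⁅u, g * v * g⁻¹⁆ = 1 := by
  rw [eq_bot_iff, commutator_le]
  simp only [conjS, mem_bot, mem_map, forall_exists_index, and_imp, forall_apply_eq_imp_iff₂,
    MulEquiv.coe_toMonoidHom, MulAut.conj_apply]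

theorem commutator_le_of_commutator_conjS_eq_bot (hA : A ≤ normalizer N) (hg : g ∈ N)
    (h : ⁅A, conjS g A⁆ = ⊥) : ⁅A, A⁆ ≤ N := by
  refine commutator_le.mpr fun u hu v hv => ?_
  -- `v = ⁅v, g⁆ · gvg⁻¹` with `⁅v, g⁆ ∈ N`
  have hv_eq : ⁅u, v⁆ = ⁅u, ⁅v, g⁆ * (g * v * g⁻¹)⁆ := by
    rw [commutatorElement_def v]; group
  rw [hv_eq, commutatorElement_mul_right_mem_iff (hA hu)
    (commutatorElement_mem_of_mem_normalizer (hA hv) hg),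
    commutator_conjS_eq_bot_iff.mp h u hu v hv]
  exact one_mem N

end Conjugate

section Family

variable {C : Set (Subgroup G)} {S N A B : Subgroup G}

theorem exists_mem_inf_commutator_conjS_eq_bot (hB : CondB C S) (hC : CondC C S)
    (hSN : S ≤ normalizer N) (hNS : N ⊓ S ≠ ⊥) (hAC : A ∈ C) :
    ∃ m ∈ N ⊓ S, ⁅A, conjS m A⁆ = ⊥ := by
  obtain ⟨⟨n, hn⟩, hn1⟩ := ne_bot_iff_exists_ne_one.mp hNS
  obtain ⟨hnN, hnS⟩ := mem_inf.mp hn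
  obtain ⟨F, hFC, hF⟩ := hB n hnS fun h => hn1 (Subtype.ext h)
  obtain ⟨s, hs, hsA⟩ := hC A hAC F hFC
  refine ⟨s⁻¹ * n * s, mem_inf.mpr ⟨(mem_normalizer_iff''.mp (hSN hs) n).mp hnN,
    mul_mem (mul_mem (inv_mem hs) hnS) hs⟩, commutator_conjS_eq_bot_iff.mpr fun u hu v hv => ?_⟩
  have hcomm := commutator_conjS_eq_bot_iff.mp hF _ (hsA (conj_mem_conjS hu)) _
    (hsA (conj_mem_conjS hv))
  calc ⁅u, s⁻¹ * n * s * v * (s⁻¹ * n * s)⁻¹⁆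
      = s⁻¹ * ⁅s * u * s⁻¹, n * (s * v * s⁻¹) * n⁻¹⁆ * s := by
        simp only [commutatorElement_def]; group
    _ = 1 := by rw [hcomm]; group

theorem commutator_self_le_of_mem (hB : CondB C S) (hC : CondC C S) (hSN : S ≤ normalizer N)
    (hNS : N ⊓ S ≠ ⊥) (hAS : A ≤ S) (hAC : A ∈ C) : ⁅A, A⁆ ≤ N := by
  obtain ⟨m, hm, hmA⟩ := exists_mem_inf_commutator_conjS_eq_bot hB hC hSN hNS hAC
  exact commutator_le_of_commutator_conjS_eq_bot (hAS.trans hSN) (mem_inf.mp hm).1 hmA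

theorem commutator_le_of_mem (hconj : ConjInvariant C) (hB : CondB C S) (hC : CondC C S)
    (hD : CondD C) (hCS : sSup C ≤ S) (hSN : S ≤ normalizer N) (hNS : N ⊓ S ≠ ⊥)
    (hAC : A ∈ C) (hBC : B ∈ C) : ⁅A, B⁆ ≤ N := by
  have hCN : ∀ E ∈ C, E ≤ normalizer N := fun E hE => ((le_sSup hE).trans hCS).trans hSN
  have hcomm : ∀ E ∈ C, ⁅E, E⁆ ≤ N := fun E hE =>
    commutator_self_le_of_mem hB hC hSN hNS ((le_sSup hE).trans hCS) hE
  obtain ⟨m, hm, hmA⟩ := exists_mem_inf_commutator_conjS_eq_bot hB hC hSN hNS hAC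
  obtain ⟨hmN, hmS⟩ := mem_inf.mp hm
  by_cases hsub : conjS m A ≤ B
  · -- modulo `N`, conjugating by `m ∈ N` changes nothing, and `mAm⁻¹` commutes with `B`
    refine commutator_le.mpr fun a ha b hb => ?_
    have hmb : m * b * m⁻¹ = ⁅b, m⁆⁻¹ * b := by
      rw [commutatorElement_inv, commutatorElement_def]; group
    rw [mem_normalizer_iff.mp (le_normalizer hmN), conjugate_commutatorElement, hmb,
      commutatorElement_mul_right_mem_iff
        (hSN (mul_mem (mul_mem hmS (hCS (le_sSup hAC ha))) (inv_mem hmS)))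
        (inv_mem (commutatorElement_mem_of_mem_normalizer (hCN B hBC hb) hmN))]
    exact commutator_le.mp (hcomm B hBC) _ (hsub (conj_mem_conjS ha)) b hb
  · obtain ⟨D, hDC, hAB⟩ := hD A hAC B hBC (conjS m A) (hconj m A hAC) hmA hsub
    exact (commutator_mono (le_sup_left.trans hAB) (le_sup_right.trans hAB)).trans
      (hcomm D hDC)

theorem sSup_le_of_inf_ne_bot (hconj : ConjInvariant C) (hB : CondB C S) (hC : CondC C S)
    (hD : CondD C) (hCS : sSup C ≤ S) (hSN : S ≤ normalizer N)
    (hperf : sSup C ≤ ⁅sSup C, sSup C⁆) (hNS : N ⊓ S ≠ ⊥) : sSup C ≤ N :=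
  hperf.trans <| commutator_sSup_le (hCS.trans hSN) fun B hBC => commutator_comm B _ ▸
    commutator_sSup_le (hCS.trans hSN) fun _ hAC =>
      commutator_le_of_mem hconj hB hC hD hCS hSN hNS hBC hAC

theorem le_commutator_of_condE {H : Subgroup G} (hE : CondE C H) (hAC : A ∈ C) :
    A ≤ ⁅H, H⁆ := by
  intro a ha
  obtain ⟨g, hg, φ, hφH, hφa, hφshift⟩ := hE A hAC
  obtain ⟨c, hc_def⟩ : ∃ c, c = φ fun _ => ⟨a, ha⟩ := ⟨_, rfl⟩
  have hc : c = a * (g * c * g⁻¹) := calc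
    c = φ ((fun i => if i = 0 then ⟨a, ha⟩ else 1) *
        fun i => match i with | 0 => 1 | _ + 1 => ⟨a, ha⟩) := by
      rw [hc_def]; congr 1; funext i; cases i <;> simp
    _ = a * (g * c * g⁻¹) := by rw [map_mul, hφa, hc_def, hφshift]
  have ha_eq : a = ⁅c, g⁆ := by
    rw [commutatorElement_def, eq_mul_inv_of_mul_eq hc.symm]
    group
  rw [ha_eq, hc_def]
  exact commutator_mem_commutator (hφH _) hg

theorem sSup_normal (hconj : ConjInvariant C) : (sSup C).Normal := by
  refine ⟨fun x hx g => ?_⟩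
  have hmap : conjS g (sSup C) ≤ sSup C := by
    rw [conjS, (gc_map_comap _).l_sSup]
    exact iSup₂_le fun A hAC => le_sSup (hconj g A hAC)
  exact hmap (conj_mem_conjS hx)

theorem sSup_ne_bot [Nontrivial G] (hA : CondA C) (hB : CondB C ⊤) : sSup C ≠ ⊥ := by
  obtain ⟨g, hg⟩ := exists_ne (1 : G)
  obtain ⟨A, hAC, -⟩ := hB g (mem_top g) hg
  obtain ⟨a, ha, b, hb, hab⟩ := hA A hAC
  intro hbot
  have hA_bot : A = ⊥ := eq_bot_iff.mpr (hbot ▸ le_sSup hAC)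
  rw [hA_bot, mem_bot] at ha hb
  simp [ha, hb] at hab

end Family

theorem isSimpleGroup_of_forall_le {H : Subgroup G} (hH : H ≠ ⊥)
    (h : ∀ N : Subgroup G, N ≤ H → H ≤ normalizer N → N ≠ ⊥ → H ≤ N) : IsSimpleGroup H := by
  have := (nontrivial_iff_ne_bot H).mpr hH
  refine ⟨fun N hN => or_iff_not_imp_left.mpr fun hN_bot => ?_⟩
  have hN_eq : (N.map H.subtype).subgroupOf H = N :=
    comap_map_eq_self_of_injective H.subtype_injective N
  rw [← hN_eq, subgroupOf_eq_top]
  refine h _ (map_subtype_le N) ?_ ?_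
  · rw [← normal_subgroupOf_iff_le_normalizer (map_subtype_le N), hN_eq]
    exact hN
  · exact fun h => hN_bot ((map_eq_bot_iff_of_injective N H.subtype_injective).mp h)

/-- Theorem (compressible splittable union, part (iii)): if 𝒞 is a joinable compression
family for `G`, `H = ⟨⋃𝒞⟩`, and 𝒞 is moreover a shift-joinable compression family for
`H`, then `H` is perfect, simple, and is the monolith of `G`. -/
theorem perfect_simple_monolith [Nontrivial G] (C : Set (Subgroup G))
    (hC : IsJoinableCompressionFamily C (⊤ : Subgroup G))
    (H : Subgroup G) (hH : H = sSup C)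
    (hshift : IsShiftJoinableCompressionFamily C H) :
    H = (⁅H, H⁆ : Subgroup G) ∧ IsSimpleGroup ↥H ∧
      H.Normal ∧ H ≠ ⊥ ∧ ∀ N : Subgroup G, N.Normal → N ≠ ⊥ → H ≤ N := by
  subst hH
  obtain ⟨⟨hconj, hA, hBG, hCG⟩, hD⟩ := hC
  obtain ⟨⟨⟨-, -, hBH, hCH⟩, -⟩, hE⟩ := hshift
  have hperf : sSup C ≤ ⁅sSup C, sSup C⁆ := sSup_le fun _ hAC => le_commutator_of_condE hE hAC
  have hne : sSup C ≠ ⊥ := sSup_ne_bot hA hBG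
  refine ⟨le_antisymm hperf (commutator_le_self _), ?_, sSup_normal hconj, hne, ?_⟩
  · exact isSimpleGroup_of_forall_le hne fun N hNH hHN hN =>
      sSup_le_of_inf_ne_bot hconj hBH hCH hD le_rfl hHN hperf (by rwa [inf_of_le_left hNH])
  · intro N hN hN_bot
    exact sSup_le_of_inf_ne_bot hconj hBG hCG hD le_top (normalizer_eq_top_iff.mpr hN).ge hperf
      (by rwa [inf_top_eq])

end Paper
end

section
/- Let G be a non-trivial group, let 𝒞 be a joinable compression family for G, and let H be a normal subgroup of G that is semi-transitive on 𝒞. Then for every A ∈ 𝒞 there exist B₁, B₂ ∈ 𝒞 such that B₁ ≤ A, B₂ ≤ A and [B₁, B₂] = {1}. -/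
namespace Paper

variable {G : Type*} [Group G]

/-!
Semi-transitivity of `G` conjugates any member of 𝒞 into any other, so it suffices that some
member contains two commuting members. If none did, joinability would make every member that
commutes with some member minimal in 𝒞. Condition (B) gives commuting members `E` and `gEg⁻¹`;
every member conjugates into `gEg⁻¹`, hence onto it, so every member is minimal, and joinability
leaves no members besides these two. A nontrivial `a ∈ E` normalizes `E` and centralizes
`gEg⁻¹`, so it fixes every member, and condition (B) for `a` produces an abelian member.
-/

open scoped Pointwise

lemma conjS_eq_smul (g : G) (A : Subgroup G) : conjS g A = MulAut.conj g • A := rfl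

lemma conjS_inv_conjS (g : G) (A : Subgroup G) : conjS g⁻¹ (conjS g A) = A := by
  rw [conjS_eq_smul, conjS_eq_smul, map_inv, inv_smul_smul]

lemma conjS_eq_self_of_mem {a : G} {P : Subgroup G} (ha : a ∈ P) : conjS a P = P :=
  Subgroup.conj_smul_eq_self_of_mem ha

lemma conjS_eq_self_of_mem_centralizer {a : G} {P : Subgroup G}
    (ha : a ∈ Subgroup.centralizer P) : conjS a P = P := by
  have hfix : ∀ x ∈ P, MulAut.conj a x = x := fun x hx => by
    rw [MulAut.conj_apply, ← Subgroup.mem_centralizer_iff.1 ha x hx, mul_inv_cancel_right]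
  ext x
  exact ⟨by rintro ⟨y, hy, rfl⟩; simpa [hfix y hy] using hy, fun hx => ⟨x, hx, hfix x hx⟩⟩

lemma commutator_conjS_eq_bot {P Q : Subgroup G} (g : G) (h : ⁅P, Q⁆ = ⊥) :
    ⁅conjS g P, conjS g Q⁆ = ⊥ := by
  rw [conjS, conjS, ← Subgroup.map_commutator, h, Subgroup.map_bot]

def ContainsCommutingPair (C : Set (Subgroup G)) (D : Subgroup G) : Prop :=
  ∃ P ∈ C, ∃ Q ∈ C, P ≤ D ∧ Q ≤ D ∧ ⁅P, Q⁆ = ⊥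

namespace ContainsCommutingPair

variable {C : Set (Subgroup G)} {D : Subgroup G}

lemma mono (h : ContainsCommutingPair C D) {A : Subgroup G} (hDA : D ≤ A) :
    ContainsCommutingPair C A := by
  obtain ⟨P, hP, Q, hQ, hPD, hQD, hPQ⟩ := h
  exact ⟨P, hP, Q, hQ, hPD.trans hDA, hQD.trans hDA, hPQ⟩

lemma conjS (hinv : ConjInvariant C) (h : ContainsCommutingPair C D) (g : G) :
    ContainsCommutingPair C (conjS g D) := by
  obtain ⟨P, hP, Q, hQ, hPD, hQD, hPQ⟩ := h
  exact ⟨_, hinv g P hP, _, hinv g Q hQ, Subgroup.map_mono hPD, Subgroup.map_mono hQD,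
    commutator_conjS_eq_bot g hPQ⟩

end ContainsCommutingPair

section CommutingPairFree

variable {C : Set (Subgroup G)}

lemma eq_of_le_of_commutator_eq_bot (hD : CondD C)
    (hfree : ∀ D ∈ C, ¬ ContainsCommutingPair C D) {M N B : Subgroup G}
    (hM : M ∈ C) (hN : N ∈ C) (hB : B ∈ C) (hNM : ⁅N, M⁆ = ⊥) (hBM : B ≤ M) : B = M := by
  by_contra hne
  obtain ⟨D, hD, hND⟩ := hD N hN B hB M hM hNM fun hMB => hne (le_antisymm hBM hMB)
  have hNB : ⁅N, B⁆ = ⊥ := le_bot_iff.1 (hNM ▸ Subgroup.commutator_mono le_rfl hBM)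
  exact hfree D hD ⟨N, hN, B, hB, le_sup_left.trans hND, le_sup_right.trans hND, hNB⟩

lemma exists_commutator_eq_bot (hinv : ConjInvariant C) (hsemi : CondC C ⊤) (hD : CondD C)
    (hfree : ∀ D ∈ C, ¬ ContainsCommutingPair C D) {E F : Subgroup G}
    (hE : E ∈ C) (hF : F ∈ C) (hEF : ⁅E, F⁆ = ⊥) {P : Subgroup G} (hP : P ∈ C) :
    ∃ Q ∈ C, ⁅Q, P⁆ = ⊥ := by
  obtain ⟨y, -, hy⟩ := hsemi P hP F hF
  have hyP : conjS y P = F := eq_of_le_of_commutator_eq_bot hD hfree hF hE (hinv y P hP) hEF hy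
  refine ⟨conjS y⁻¹ E, hinv _ E hE, ?_⟩
  rw [← conjS_inv_conjS y P, hyP]
  exact commutator_conjS_eq_bot _ hEF

lemma eq_or_eq_of_commutator_eq_bot (hinv : ConjInvariant C) (hsemi : CondC C ⊤) (hD : CondD C)
    (hfree : ∀ D ∈ C, ¬ ContainsCommutingPair C D) {E F : Subgroup G}
    (hE : E ∈ C) (hF : F ∈ C) (hEF : ⁅E, F⁆ = ⊥) {P : Subgroup G} (hP : P ∈ C) :
    P = E ∨ P = F := by
  have minimal : ∀ {M B}, M ∈ C → B ∈ C → B ≤ M → B = M := fun hM hB hBM => by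
    obtain ⟨N, hN, hNM⟩ := exists_commutator_eq_bot hinv hsemi hD hfree hE hF hEF hM
    exact eq_of_le_of_commutator_eq_bot hD hfree hM hN hB hNM hBM
  refine or_iff_not_imp_right.2 fun hPF => ?_
  obtain ⟨D, hDC, hEPD⟩ := hD E hE P hP F hF hEF fun hFP => hPF (minimal hP hF hFP).symm
  have hED : E = D := minimal hDC hE (le_sup_left.trans hEPD)
  exact minimal hE hP (hED ▸ le_sup_right.trans hEPD)

end CommutingPairFree

lemma exists_containsCommutingPair [Nontrivial G] {C : Set (Subgroup G)}
    (hC : IsJoinableCompressionFamily C ⊤) : ∃ D ∈ C, ContainsCommutingPair C D := by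
  by_contra! hfree
  obtain ⟨⟨hinv, hcondA, hcondB, hsemi⟩, hD⟩ := hC
  obtain ⟨g, hg⟩ := exists_ne (1 : G)
  obtain ⟨E, hE, hEF⟩ := hcondB g trivial hg
  have hmem : ∀ P ∈ C, P = E ∨ P = conjS g E := fun _ hP =>
    eq_or_eq_of_commutator_eq_bot hinv hsemi hD hfree hE (hinv g E hE) hEF hP
  obtain ⟨a, ha, b, -, hab⟩ := hcondA E hE
  have ha1 : a ≠ 1 := by rintro rfl; simp at hab
  have hfix : ∀ X ∈ C, conjS a X = X := fun X hX => by
    rcases hmem X hX with rfl | rfl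
    · exact conjS_eq_self_of_mem ha
    · exact conjS_eq_self_of_mem_centralizer
        (Subgroup.commutator_eq_bot_iff_le_centralizer.1 hEF ha)
  obtain ⟨A, hA, hcomm⟩ := hcondB a trivial ha1
  rw [hfix A hA] at hcomm
  exact hfree A hA ⟨A, hA, A, hA, le_rfl, le_rfl, hcomm⟩

theorem exists_commuting_members_below_general [Nontrivial G] (C : Set (Subgroup G))
    (hC : IsJoinableCompressionFamily C (⊤ : Subgroup G)) :
    ∀ A ∈ C, ∃ B₁ ∈ C, ∃ B₂ ∈ C, B₁ ≤ A ∧ B₂ ≤ A ∧ ⁅B₁, B₂⁆ = (⊥ : Subgroup G) := by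
  intro A hA
  obtain ⟨D, hDC, hDpair⟩ := exists_containsCommutingPair hC
  obtain ⟨⟨hinv, -, -, hsemi⟩, -⟩ := hC
  obtain ⟨x, -, hx⟩ := hsemi D hDC A hA
  exact (hDpair.conjS hinv x).mono hx

/-- Lemma (leafless, part (i)): if 𝒞 is a joinable compression family for `G` and `H` is
a normal subgroup of `G` that is semi-transitive on 𝒞, then every `A ∈ 𝒞` contains two
commuting members of 𝒞. -/
theorem exists_commuting_members_below [Nontrivial G] (C : Set (Subgroup G))
    (hC : IsJoinableCompressionFamily C (⊤ : Subgroup G))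
    (H : Subgroup G) (hN : H.Normal) (hsemi : CondC C H) :
    ∀ A ∈ C, ∃ B₁ ∈ C, ∃ B₂ ∈ C, B₁ ≤ A ∧ B₂ ≤ A ∧ ⁅B₁, B₂⁆ = (⊥ : Subgroup G) :=
  exists_commuting_members_below_general C hC

end Paper
end

section
/- Let X be an infinite, compact, zero-dimensional Hausdorff space and let G ≤ Homeo(X) be such that G = F(G). Suppose the action of G on X is compressible and minimal. Then the action of G on X is fully compressible, and G is generated by the rigid stabilisers rist_G(Y) over all G-compressible clopen subsets Y of X. -/
/-
Swaps are the engine: if `V` is clopen and disjoint from `g • V`, the map acting as `g` on `V`,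
as `g⁻¹` on `g • V` and trivially elsewhere is a homeomorphism that is locally in `G`, hence in
`G = F(G)`. With them, compressible clopen sets `A`, `B` can be moved into disjoint clopen
pieces of a compressible open set `R` missing `A ∪ B`, so `A ∪ B` is compressible (`R` splits
because minimality and compactness leave no isolated points). Covering a clopen `C ≠ X` by
finitely many `C ∩ g • U`, for a compressible clopen `U` with a translate inside `X ∖ C`,
shows that `C`, and so every non-dense open set, is compressible. Finally, for `g` moving `x`,
choose a clopen `V ∋ x` with `V`, `g • V` disjoint and `V ∪ g • V ≠ X`; the swap `γ` of `V`
lies in `rist (V ∪ g • V)` and `γ⁻¹ * g` in `rist Vᶜ`.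
-/

open scoped Pointwise

namespace Paper

/-- The rigid stabiliser of `Y ⊆ X` in `G`: the pointwise stabiliser of `X ∖ Y`. -/
def rist (G : Type*) {X : Type*} [Group G] [MulAction G X] (Y : Set X) : Subgroup G where
  carrier := {g | ∀ x : X, x ∉ Y → g • x = x}
  one_mem' := fun x _ => one_smul G x
  mul_mem' := by
    intro a b ha hb x hx
    rw [mul_smul, hb x hx, ha x hx]
  inv_mem' := by
    intro a ha x hx
    nth_rewrite 1 [← ha x hx]
    exact inv_smul_smul a x

/-- `Y` is compressible by the subgroup `H`: every non-empty open set contains an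
`H`-translate of `Y`. -/
def CompressibleBy {G X : Type*} [Group G] [MulAction G X] [TopologicalSpace X]
    (H : Subgroup G) (Y : Set X) : Prop :=
  ∀ O : Set X, IsOpen O → O.Nonempty → ∃ h ∈ H, h • Y ⊆ O

/-- `G` (acting on `X`) equals its own piecewise full group: every homeomorphism of `X`
that locally agrees with elements of `G` is (induced by) an element of `G`. -/
def IsPiecewiseFull (G X : Type*) [Group G] [MulAction G X] [TopologicalSpace X] : Prop :=
  ∀ φ : X ≃ₜ X,
    (∀ x : X, ∃ U : Set X, IsOpen U ∧ x ∈ U ∧ ∃ g : G, ∀ y ∈ U, φ y = g • y) →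
    ∃ g : G, ∀ x : X, φ x = g • x

section

variable {G X : Type*} [Group G] [MulAction G X] [TopologicalSpace X]

lemma compressibleBy_empty (H : Subgroup G) : CompressibleBy H (∅ : Set X) :=
  fun _ _ _ => ⟨1, H.one_mem, by simp⟩

lemma CompressibleBy.mono {H : Subgroup G} {A B : Set X} (h : CompressibleBy H A)
    (hBA : B ⊆ A) : CompressibleBy H B := fun O hO hne =>
  let ⟨g, hg, hgA⟩ := h O hO hne
  ⟨g, hg, (Set.smul_set_mono hBA).trans hgA⟩

lemma CompressibleBy.smul {H : Subgroup G} {A : Set X} (h : CompressibleBy H A) {g : G}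
    (hg : g ∈ H) : CompressibleBy H (g • A) := fun O hO hne => by
  obtain ⟨k, hk, hkA⟩ := h O hO hne
  exact ⟨k * g⁻¹, H.mul_mem hk (H.inv_mem hg), by rwa [smul_smul, inv_mul_cancel_right]⟩

lemma CompressibleBy.of_smul_subset {H : Subgroup G} {A R : Set X} (h : CompressibleBy H R)
    {g : G} (hg : g ∈ H) (hA : g • A ⊆ R) : CompressibleBy H A :=
  (h.smul (H.inv_mem hg)).mono (Set.smul_set_subset_iff_subset_inv_smul_set.1 hA)

lemma exists_isClopen_compressibleBy {H : Subgroup G}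
    (hbasis : TopologicalSpace.IsTopologicalBasis {U : Set X | IsClopen U})
    (h : ∃ Y : Set X, IsOpen Y ∧ Y.Nonempty ∧ CompressibleBy H Y) :
    ∃ U : Set X, IsClopen U ∧ U.Nonempty ∧ CompressibleBy H U := by
  obtain ⟨Y, hY, ⟨y, hy⟩, hcY⟩ := h
  obtain ⟨U, hU, hyU, hUY⟩ := hbasis.exists_subset_of_mem_open hy hY
  exact ⟨U, hU, ⟨y, hyU⟩, hcY.mono hUY⟩

lemma _root_.IsClopen.smul [ContinuousConstSMul G X] {V : Set X} (hV : IsClopen V) (g : G) :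
    IsClopen (g • V) :=
  ⟨hV.isClosed.smul g, hV.isOpen.smul g⟩

lemma IsPiecewiseFull.exists_eq_smul_of_involutive [ContinuousConstSMul G X]
    (hpf : IsPiecewiseFull G X) {f : X → X} (hf : Function.Involutive f)
    (hloc : ∀ x : X, ∃ U : Set X, IsOpen U ∧ x ∈ U ∧ ∃ g : G, ∀ y ∈ U, f y = g • y) :
    ∃ g : G, ∀ x, f x = g • x := by
  have hcont : Continuous f := continuous_iff_continuousAt.2 fun x => by
    obtain ⟨U, hU, hxU, g, hg⟩ := hloc x
    exact (continuous_const_smul g).continuousAt.congr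
      (Filter.eventuallyEq_of_mem (hU.mem_nhds hxU) fun y hy => (hg y hy).symm)
  exact hpf { toEquiv := hf.toPerm f, continuous_toFun := hcont, continuous_invFun := hcont } hloc

lemma IsPiecewiseFull.exists_swap [ContinuousConstSMul G X] (hpf : IsPiecewiseFull G X)
    {V : Set X} (hV : IsClopen V) {g : G} (hd : Disjoint V (g • V)) :
    ∃ γ ∈ rist G (V ∪ g • V), ∀ x ∈ V, γ • x = g • x := by
  classical
  have hgV : IsClopen (g • V) := hV.smul g
  set f : X → X := fun x => if x ∈ V then g • x else if x ∈ g • V then g⁻¹ • x else x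
  have hfV : ∀ x ∈ V, f x = g • x := fun x hx => if_pos hx
  have hfgV : ∀ x ∈ g • V, f x = g⁻¹ • x := fun x hx => by
    simp [f, Set.disjoint_right.1 hd hx, hx]
  have hfout : ∀ x ∉ V ∪ g • V, f x = x := fun x hx => by
    simp_all [f]
  have hf : Function.Involutive f := fun x => by
    by_cases h₁ : x ∈ V
    · rw [hfV x h₁, hfgV _ (Set.smul_mem_smul_set h₁), inv_smul_smul]
    by_cases h₂ : x ∈ g • V
    · rw [hfgV x h₂, hfV _ (Set.mem_smul_set_iff_inv_smul_mem.1 h₂), smul_inv_smul]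
    · have hx : x ∉ V ∪ g • V := by simp [h₁, h₂]
      rw [hfout x hx, hfout x hx]
  obtain ⟨γ, hγ⟩ := hpf.exists_eq_smul_of_involutive hf fun x => by
    by_cases h₁ : x ∈ V
    · exact ⟨V, hV.isOpen, h₁, g, hfV⟩
    by_cases h₂ : x ∈ g • V
    · exact ⟨g • V, hgV.isOpen, h₂, g⁻¹, hfgV⟩
    · exact ⟨(V ∪ g • V)ᶜ, (hV.union hgV).compl.isOpen, by simp [h₁, h₂], 1,
        fun y hy => by rw [hfout y hy, one_smul]⟩
  exact ⟨γ, fun x hx => by rw [← hγ, hfout x hx], fun x hx => by rw [← hγ, hfV x hx]⟩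

variable (G) in
lemma perfectSpace_of_isMinimal [CompactSpace X] [Infinite X] [MulAction.IsMinimal G X]
    [ContinuousConstSMul G X] : PerfectSpace X := by
  refine perfectSpace_iff_forall_not_isolated.2 fun x => ⟨fun hx => ?_⟩
  obtain ⟨t, ht⟩ := isCompact_univ.exists_finite_cover_smul G
    ((isOpen_singleton_iff_punctured_nhds x).2 hx) (Set.singleton_nonempty x)
  refine Set.infinite_univ (((t.finite_toSet.image fun g : G => g • x)).subset fun y hy => ?_)
  obtain ⟨g, hg, hy⟩ := Set.mem_iUnion₂.1 (ht hy)
  rw [Set.smul_set_singleton, Set.mem_singleton_iff] at hy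
  exact ⟨g, hg, hy.symm⟩

lemma exists_disjoint_isClopen_subsets [PerfectSpace X] [T1Space X]
    (hbasis : TopologicalSpace.IsTopologicalBasis {U : Set X | IsClopen U})
    {R : Set X} (hR : IsOpen R) (hne : R.Nonempty) :
    ∃ R₁ R₂ : Set X, IsClopen R₁ ∧ IsClopen R₂ ∧ R₁.Nonempty ∧ R₂.Nonempty ∧
      R₁ ⊆ R ∧ R₂ ⊆ R ∧ Disjoint R₁ R₂ := by
  obtain ⟨x, hx⟩ := hne
  obtain ⟨y, ⟨hy, -⟩, hyx⟩ := accPt_iff_nhds.1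
    (PerfectSpace.univ_preperfect x (Set.mem_univ x)) R (hR.mem_nhds hx)
  obtain ⟨R₁, hR₁, hxR₁, hR₁R⟩ := hbasis.exists_subset_of_mem_open
    (show x ∈ R \ {y} from ⟨hx, Ne.symm hyx⟩) (hR.sdiff isClosed_singleton)
  obtain ⟨R₂, hR₂, hyR₂, hR₂R⟩ := hbasis.exists_subset_of_mem_open
    (show y ∈ R \ R₁ from ⟨hy, fun h => (hR₁R h).2 rfl⟩) (hR.sdiff hR₁.isClosed)
  exact ⟨R₁, R₂, hR₁, hR₂, ⟨x, hxR₁⟩, ⟨y, hyR₂⟩, fun z hz => (hR₁R hz).1,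
    fun z hz => (hR₂R hz).1, Set.disjoint_right.2 fun z hz => (hR₂R hz).2⟩

lemma IsPiecewiseFull.exists_smul_union_subset [ContinuousConstSMul G X]
    (hpf : IsPiecewiseFull G X) {A B R₁ R₂ : Set X} (hA : IsClopen A) (hB : IsClopen B)
    {a b : G} (ha : a • A ⊆ R₁) (hb : b • B ⊆ R₂) (hR₁ : Disjoint R₁ (A ∪ B))
    (hR₂ : Disjoint R₂ B) (h₁₂ : Disjoint R₁ R₂) : ∃ γ : G, γ • (A ∪ B) ⊆ R₁ ∪ R₂ := by
  have hR₁A : Disjoint R₁ A := hR₁.mono_right Set.subset_union_left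
  have hR₁B : Disjoint R₁ B := hR₁.mono_right Set.subset_union_right
  obtain ⟨γ₁, hγ₁, hγ₁A⟩ := hpf.exists_swap hA (hR₁A.symm.mono_right ha)
  obtain ⟨γ₂, hγ₂, hγ₂B⟩ := hpf.exists_swap hB (hR₂.symm.mono_right hb)
  refine ⟨γ₂ * γ₁, Set.smul_set_subset_iff.2 fun x hx => ?_⟩
  rw [mul_smul]
  by_cases hxA : x ∈ A
  · have haxR₁ : a • x ∈ R₁ := ha (Set.smul_mem_smul_set hxA)
    have haxB : a • x ∉ B ∪ b • B := by
      rintro (h | h)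
      · exact Set.disjoint_left.1 hR₁B haxR₁ h
      · exact Set.disjoint_left.1 h₁₂ haxR₁ (hb h)
    exact Or.inl (by rwa [hγ₁A x hxA, hγ₂ _ haxB])
  · have hxB : x ∈ B := hx.resolve_left hxA
    have hxaA : x ∉ A ∪ a • A := by
      rintro (h | h)
      · exact hxA h
      · exact Set.disjoint_right.1 hR₁B hxB (ha h)
    exact Or.inr (by rw [hγ₁ x hxaA, hγ₂B x hxB]; exact hb (Set.smul_mem_smul_set hxB))

lemma CompressibleBy.union [PerfectSpace X] [T1Space X] [ContinuousConstSMul G X]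
    (hbasis : TopologicalSpace.IsTopologicalBasis {U : Set X | IsClopen U})
    (hpf : IsPiecewiseFull G X) {A B R : Set X} (hA : IsClopen A) (hB : IsClopen B)
    (hcA : CompressibleBy (⊤ : Subgroup G) A) (hcB : CompressibleBy (⊤ : Subgroup G) B)
    (hR : IsOpen R) (hRne : R.Nonempty) (hcR : CompressibleBy (⊤ : Subgroup G) R)
    (hd : Disjoint R (A ∪ B)) : CompressibleBy (⊤ : Subgroup G) (A ∪ B) := by
  obtain ⟨R₁, R₂, hR₁, hR₂, hR₁ne, hR₂ne, hR₁R, hR₂R, h₁₂⟩ :=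
    exists_disjoint_isClopen_subsets hbasis hR hRne
  obtain ⟨a, -, ha⟩ := hcA R₁ hR₁.isOpen hR₁ne
  obtain ⟨b, -, hb⟩ := hcB R₂ hR₂.isOpen hR₂ne
  obtain ⟨γ, hγ⟩ := hpf.exists_smul_union_subset hA hB ha hb (hd.mono_left hR₁R)
    ((hd.mono_left hR₂R).mono_right Set.subset_union_right) h₁₂
  exact hcR.of_smul_subset trivial (hγ.trans (Set.union_subset hR₁R hR₂R))

lemma compressibleBy_biUnion_finset [PerfectSpace X] [T1Space X] [ContinuousConstSMul G X]
    (hbasis : TopologicalSpace.IsTopologicalBasis {U : Set X | IsClopen U})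
    (hpf : IsPiecewiseFull G X) {ι : Type*} (s : Finset ι) {A : ι → Set X}
    (hA : ∀ i ∈ s, IsClopen (A i)) (hcA : ∀ i ∈ s, CompressibleBy (⊤ : Subgroup G) (A i))
    {R : Set X} (hR : IsOpen R) (hRne : R.Nonempty) (hcR : CompressibleBy (⊤ : Subgroup G) R)
    (hd : ∀ i ∈ s, Disjoint R (A i)) : CompressibleBy (⊤ : Subgroup G) (⋃ i ∈ s, A i) := by
  classical
  induction s using Finset.induction_on with
  | empty => simpa using compressibleBy_empty (X := X) (⊤ : Subgroup G)
  | insert i s _ ih =>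
    simp only [Finset.mem_insert, forall_eq_or_imp] at hA hcA hd
    rw [Finset.set_biUnion_insert]
    exact hcA.1.union hbasis hpf hA.1 (isClopen_biUnion_finset hA.2) (ih hA.2 hcA.2 hd.2)
      hR hRne hcR (Set.disjoint_union_right.2 ⟨hd.1, Set.disjoint_iUnion₂_right.2 hd.2⟩)

lemma compressibleBy_of_isClopen_of_compl_nonempty [CompactSpace X] [PerfectSpace X]
    [T1Space X] [MulAction.IsMinimal G X] [ContinuousConstSMul G X]
    (hbasis : TopologicalSpace.IsTopologicalBasis {U : Set X | IsClopen U})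
    (hpf : IsPiecewiseFull G X) {U : Set X} (hU : IsClopen U) (hUne : U.Nonempty)
    (hcU : CompressibleBy (⊤ : Subgroup G) U) {C : Set X} (hC : IsClopen C)
    (hCc : Cᶜ.Nonempty) : CompressibleBy (⊤ : Subgroup G) C := by
  obtain ⟨t, ht⟩ := isCompact_univ.exists_finite_cover_smul G hU.isOpen hUne
  obtain ⟨k, -, hk⟩ := hcU Cᶜ hC.isClosed.isOpen_compl hCc
  have hCt : C ⊆ ⋃ g ∈ t, C ∩ g • U := fun x hx => by
    obtain ⟨g, hg, hxg⟩ := Set.mem_iUnion₂.1 (ht (Set.mem_univ x))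
    exact Set.mem_iUnion₂.2 ⟨g, hg, hx, hxg⟩
  refine (compressibleBy_biUnion_finset hbasis hpf t (fun g _ => hC.inter (hU.smul g))
    (fun g _ => (hcU.smul trivial).mono Set.inter_subset_right) (hU.isOpen.smul k)
    hUne.smul_set (hcU.smul trivial) fun g _ => ?_).mono hCt
  exact Set.disjoint_left.2 fun x hx hx' => hk hx hx'.1

lemma compressibleBy_of_not_dense {H : Subgroup G}
    (hbasis : TopologicalSpace.IsTopologicalBasis {U : Set X | IsClopen U})
    (hclopen : ∀ C : Set X, IsClopen C → Cᶜ.Nonempty → CompressibleBy H C)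
    {O : Set X} (hO : ¬Dense O) : CompressibleBy H O := by
  obtain ⟨z, hz⟩ : ∃ z, z ∉ closure O := by simpa [Dense] using hO
  obtain ⟨K, hK, hzK, hKO⟩ := hbasis.exists_subset_of_mem_open hz isClosed_closure.isOpen_compl
  exact (hclopen Kᶜ hK.compl (by rw [compl_compl]; exact ⟨z, hzK⟩)).mono
    fun w hw hwK => hKO hwK (subset_closure hw)

lemma exists_isClopen_mem_disjoint_smul [T2Space X] [ContinuousConstSMul G X]
    (hbasis : TopologicalSpace.IsTopologicalBasis {U : Set X | IsClopen U})
    {g : G} {x z : X} (hgx : g • x ≠ x) (hzx : z ≠ x) (hzgx : z ≠ g • x) :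
    ∃ V : Set X, IsClopen V ∧ x ∈ V ∧ Disjoint V (g • V) ∧ z ∉ V ∪ g • V := by
  obtain ⟨W₁, W₂, hW₁, hW₂, hxW₁, hgxW₂, hW⟩ := t2_separation hgx.symm
  obtain ⟨V, hV, hxV, hVW⟩ := hbasis.exists_subset_of_mem_open
    (show x ∈ (W₁ \ {z}) ∩ (fun y : X => g • y) ⁻¹' (W₂ \ {z}) from
      ⟨⟨hxW₁, hzx.symm⟩, hgxW₂, hzgx.symm⟩)
    ((hW₁.sdiff isClosed_singleton).inter
      ((hW₂.sdiff isClosed_singleton).preimage (continuous_const_smul g)))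
  have hgV : g • V ⊆ W₂ \ {z} := Set.smul_set_subset_iff.2 fun y hy => (hVW hy).2
  refine ⟨V, hV, hxV, hW.mono (fun y hy => (hVW hy).1.1) (fun y hy => (hgV hy).1), ?_⟩
  rintro (h | h)
  · exact (hVW h).1.2 rfl
  · exact (hgV h).2 rfl

lemma mem_iSup_rist [T2Space X] [Infinite X] [ContinuousConstSMul G X]
    (hbasis : TopologicalSpace.IsTopologicalBasis {U : Set X | IsClopen U})
    (hpf : IsPiecewiseFull G X)
    (hclopen : ∀ C : Set X, IsClopen C → Cᶜ.Nonempty → CompressibleBy (⊤ : Subgroup G) C)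
    (g : G) :
    g ∈ ⨆ Y ∈ {Y : Set X | IsClopen Y ∧ CompressibleBy (⊤ : Subgroup G) Y}, rist G Y := by
  classical
  have hmem : ∀ Y : Set X, IsClopen Y → Yᶜ.Nonempty → ∀ h ∈ rist G Y,
      h ∈ ⨆ Y ∈ {Y : Set X | IsClopen Y ∧ CompressibleBy (⊤ : Subgroup G) Y}, rist G Y :=
    fun Y hY hYc h hh =>
      Subgroup.mem_iSup_of_mem Y (Subgroup.mem_iSup_of_mem ⟨hY, hclopen Y hY hYc⟩ hh)
  by_cases hg : ∀ x : X, g • x = x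
  · exact hmem ∅ isClopen_empty (by simp) g fun x _ => hg x
  obtain ⟨x, hgx⟩ := not_forall.1 hg
  obtain ⟨z, hz⟩ := Infinite.exists_notMem_finset ({x, g • x} : Finset X)
  simp only [Finset.mem_insert, Finset.mem_singleton, not_or] at hz
  obtain ⟨V, hV, hxV, hd, hzV⟩ := exists_isClopen_mem_disjoint_smul hbasis hgx hz.1 hz.2
  obtain ⟨γ, hγ, hγV⟩ := hpf.exists_swap hV hd
  have hγg : γ⁻¹ * g ∈ rist G Vᶜ := fun y hy => by
    rw [mul_smul, ← hγV y (not_not.1 hy), inv_smul_smul]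
  have := mul_mem (hmem _ (hV.union (hV.smul g)) ⟨z, hzV⟩ γ hγ)
    (hmem _ hV.compl ⟨x, by simpa⟩ _ hγg)
  rwa [mul_inv_cancel_left] at this

end

theorem minimal_compressible_fully_compressible_general {G X : Type*} [Group G]
    [TopologicalSpace X] [T2Space X] [Infinite X] [CompactSpace X]
    [MulAction G X]
    (hbasis : TopologicalSpace.IsTopologicalBasis {U : Set X | IsClopen U})
    (hcont : ∀ g : G, Continuous fun x : X => g • x)
    (hpf : IsPiecewiseFull G X)
    (hcompr : ∃ Y : Set X, IsOpen Y ∧ Y.Nonempty ∧ CompressibleBy (⊤ : Subgroup G) Y)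
    (hmin : ∀ x : X, Dense (MulAction.orbit G x)) :
    (∀ O : Set X, IsOpen O → ¬ Dense O → CompressibleBy (⊤ : Subgroup G) O) ∧
      (⊤ : Subgroup G) =
        ⨆ Y ∈ {Y : Set X | IsClopen Y ∧ CompressibleBy (⊤ : Subgroup G) Y}, rist G Y := by
  have : ContinuousConstSMul G X := ⟨hcont⟩
  have : MulAction.IsMinimal G X := ⟨hmin⟩
  have : PerfectSpace X := perfectSpace_of_isMinimal G
  obtain ⟨U, hU, hUne, hcU⟩ := exists_isClopen_compressibleBy hbasis hcompr
  have hclopen : ∀ C : Set X, IsClopen C → Cᶜ.Nonempty → CompressibleBy (⊤ : Subgroup G) C :=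
    fun C hC hCc => compressibleBy_of_isClopen_of_compl_nonempty hbasis hpf hU hUne hcU hC hCc
  exact ⟨fun O _ hO => compressibleBy_of_not_dense hbasis hclopen hO,
    (eq_top_iff.2 fun g _ => mem_iSup_rist hbasis hpf hclopen g).symm⟩

/-- Lemma: let `X` be an infinite compact zero-dimensional Hausdorff space and `G` a
piecewise full group of homeomorphisms of `X` with compressible minimal action.  Then
the action is fully compressible and `G` is generated by the rigid stabilisers of
`G`-compressible clopen sets. -/
theorem minimal_compressible_fully_compressible {G X : Type*} [Group G]
    [TopologicalSpace X] [T2Space X] [Infinite X] [CompactSpace X]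
    [MulAction G X] [FaithfulSMul G X]
    (hbasis : TopologicalSpace.IsTopologicalBasis {U : Set X | IsClopen U})
    (hcont : ∀ g : G, Continuous fun x : X => g • x)
    (hpf : IsPiecewiseFull G X)
    (hcompr : ∃ Y : Set X, IsOpen Y ∧ Y.Nonempty ∧ CompressibleBy (⊤ : Subgroup G) Y)
    (hmin : ∀ x : X, Dense (MulAction.orbit G x)) :
    (∀ O : Set X, IsOpen O → ¬ Dense O → CompressibleBy (⊤ : Subgroup G) O) ∧
      (⊤ : Subgroup G) =
        ⨆ Y ∈ {Y : Set X | IsClopen Y ∧ CompressibleBy (⊤ : Subgroup G) Y}, rist G Y :=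
  minimal_compressible_fully_compressible_general hbasis hcont hpf hcompr hmin

end Paper
end
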